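/- arXiv:2307.04050 — 2 statements merged into one kernel-verified Lean document; each statement's English description precedes it below -/
import Mathlib

section
/- The unit-volume load planning problem with binary trailer decisions is equivalent to set cover: given ground set U = K of commodities and, for each sort pair s ∈ S, the subset K_s = {k ∈ K : s ∈ S^k}, the minimum number of sort pairs y with Σ_s y_s trailers needed to feasibly containerize all commodities (with Q = max_s |K_s|, unit volumes, unit costs) equals the minimum number of subsets K_s whose union is K, provided every commodity has at least one compatible sort pair. -/
/-!
A feasible plan opens a trailer on every sort pair that carries a positive fraction of some
commodity, so the open sort pairs form a cover of no larger size than the number of trailers.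
Conversely, a cover `T` yields a plan of value `|T|`: send each commodity entirely to one sort
pair of `T` compatible with it, and open exactly the trailers of `T`; the capacity `Q` is then
never exceeded because no sort pair is compatible with more than `Q` commodities.
-/

open Finset

namespace Nat

theorem sInf_le_sInf_of_forall_exists_le {A B : Set ℕ} (hA : A.Nonempty)
    (h : ∀ a ∈ A, ∃ b ∈ B, b ≤ a) : sInf B ≤ sInf A := by
  obtain ⟨b, hb, hba⟩ := h _ (Nat.sInf_mem hA)
  exact (Nat.sInf_le hb).trans hba

theorem sInf_eq_of_forall_exists_le {A B : Set ℕ} (hAB : ∀ a ∈ A, ∃ b ∈ B, b ≤ a)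
    (hBA : ∀ b ∈ B, ∃ a ∈ A, a ≤ b) : sInf A = sInf B := by
  rcases A.eq_empty_or_nonempty with rfl | hA
  · have hB : B = ∅ := Set.eq_empty_of_forall_notMem fun b hb => by simpa using hBA b hb
    rw [hB]
  · obtain ⟨b, hb, -⟩ := hAB _ hA.some_mem
    exact le_antisymm (sInf_le_sInf_of_forall_exists_le ⟨b, hb⟩ hBA)
      (sInf_le_sInf_of_forall_exists_le hA hAB)

end Nat

theorem Finset.card_filter_ne_zero_le_sum {ι : Type*} (t : Finset ι) (y : ι → ℕ) :
    (t.filter fun i => y i ≠ 0).card ≤ ∑ i ∈ t, y i :=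
  calc (t.filter fun i => y i ≠ 0).card
      = ∑ _ ∈ t.filter fun i => y i ≠ 0, 1 := card_eq_sum_ones _
    _ ≤ ∑ i ∈ t.filter fun i => y i ≠ 0, y i :=
        sum_le_sum fun _ hi => Nat.one_le_iff_ne_zero.mpr (mem_filter.mp hi).2
    _ ≤ ∑ i ∈ t, y i := sum_le_sum_of_subset (filter_subset _ _)

namespace LoadPlan

variable {S K : Type*} [Fintype S] [Fintype K] [DecidableEq S]

/-- The set `K_s` of the set cover instance. -/
def commoditiesAt (Sk : K → Finset S) (s : S) : Finset K :=
  univ.filter fun k => s ∈ Sk k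

def trailerCounts (Sk : K → Finset S) (Q : ℕ) : Set ℕ :=
  {n | ∃ (x : K → S → ℝ) (y : S → ℕ),
    (∀ k s, 0 ≤ x k s) ∧
    (∀ k s, s ∉ Sk k → x k s = 0) ∧
    (∀ k, (∑ s ∈ Sk k, x k s) = 1) ∧
    (∀ s, y s ≤ 1) ∧
    (∀ s, (∑ k ∈ commoditiesAt Sk s, x k s) ≤ (Q : ℝ) * (y s : ℝ)) ∧
    n = ∑ s, y s}

def coverSizes (Sk : K → Finset S) : Set ℕ :=
  {n | ∃ T : Finset S, (∀ k, ∃ s ∈ T, s ∈ Sk k) ∧ n = T.card}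

theorem exists_coverSize_le {Sk : K → Finset S} {Q n : ℕ} (hn : n ∈ trailerCounts Sk Q) :
    ∃ m ∈ coverSizes Sk, m ≤ n := by
  obtain ⟨x, y, hx_nonneg, -, hx_sum, -, hcap, rfl⟩ := hn
  refine ⟨_, ⟨univ.filter fun s => y s ≠ 0, fun k => ?_, rfl⟩, card_filter_ne_zero_le_sum univ y⟩
  obtain ⟨s, hs, hxks⟩ := exists_ne_zero_of_sum_ne_zero (hx_sum k ▸ one_ne_zero)
  refine ⟨s, mem_filter.mpr ⟨mem_univ s, fun hys => hxks ?_⟩, hs⟩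
  have hload : x k s ≤ ∑ k' ∈ commoditiesAt Sk s, x k' s :=
    single_le_sum (fun k' _ => hx_nonneg k' s) (mem_filter.mpr ⟨mem_univ k, hs⟩)
  have hcap_s := hcap s
  rw [hys, Nat.cast_zero, mul_zero] at hcap_s
  exact le_antisymm (hload.trans hcap_s) (hx_nonneg k s)

theorem exists_trailerCount_le {Sk : K → Finset S} {Q n : ℕ}
    (hQ : ∀ s, (commoditiesAt Sk s).card ≤ Q) (hn : n ∈ coverSizes Sk) :
    ∃ m ∈ trailerCounts Sk Q, m ≤ n := by
  obtain ⟨T, hT, rfl⟩ := hn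
  choose f hfT hfSk using hT
  refine ⟨T.card, ⟨fun k s => if s = f k then 1 else 0, fun s => if s ∈ T then 1 else 0,
    fun k s => by positivity, fun k s hs => if_neg fun h : s = f k => hs (h ▸ hfSk k),
    fun k => ?_, fun s => by dsimp only; split_ifs <;> simp, fun s => ?_, ?_⟩, le_rfl⟩
  · rw [sum_ite_eq' (Sk k) (f k) fun _ => (1 : ℝ), if_pos (hfSk k)]
  · by_cases hsT : s ∈ T
    · calc (∑ k ∈ commoditiesAt Sk s, if s = f k then (1 : ℝ) else 0)
          ≤ ∑ k ∈ commoditiesAt Sk s, 1 := sum_le_sum fun k _ => by split_ifs <;> norm_num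
        _ = (commoditiesAt Sk s).card := by rw [sum_const, nsmul_one]
        _ ≤ Q := by exact_mod_cast hQ s
        _ = Q * ((if s ∈ T then 1 else 0 : ℕ) : ℝ) := by simp [hsT]
    · have hx_zero : ∀ k, (if s = f k then (1 : ℝ) else 0) = 0 :=
        fun k => if_neg fun h : s = f k => hsT (h ▸ hfT k)
      simp [hx_zero, hsT]
  · rw [sum_boole, Nat.cast_id, filter_mem_eq_inter, univ_inter]

end LoadPlan

theorem stmt3_general
    {S K : Type*} [Fintype S] [Fintype K] [DecidableEq S]
    (Sk : K → Finset S)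
    (Q : ℕ)
    (hQ : Q = Finset.univ.sup fun s : S => (Finset.univ.filter fun k => s ∈ Sk k).card) :
    sInf {n : ℕ | ∃ (x : K → S → ℝ) (y : S → ℕ),
        (∀ k s, 0 ≤ x k s) ∧
        (∀ k s, s ∉ Sk k → x k s = 0) ∧
        (∀ k, (∑ s ∈ Sk k, x k s) = 1) ∧
        (∀ s, y s ≤ 1) ∧
        (∀ s, (∑ k ∈ Finset.univ.filter fun k => s ∈ Sk k, x k s) ≤ (Q : ℝ) * (y s : ℝ)) ∧
        n = ∑ s, y s}
      =
    sInf {n : ℕ | ∃ T : Finset S, (∀ k, ∃ s ∈ T, s ∈ Sk k) ∧ n = T.card} := by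
  have hcard : ∀ s, (LoadPlan.commoditiesAt Sk s).card ≤ Q :=
    fun s => hQ ▸ Finset.le_sup (f := fun s => (LoadPlan.commoditiesAt Sk s).card) (mem_univ s)
  exact Nat.sInf_eq_of_forall_exists_le (A := LoadPlan.trailerCounts Sk Q)
    (B := LoadPlan.coverSizes Sk) (fun _ => LoadPlan.exists_coverSize_le)
    (fun _ => LoadPlan.exists_trailerCount_le hcard)

/-- the unit-volume load planning problem with binary trailer
decisions is equivalent to set cover: the minimum number of trailers
`Σ_s y_s` over feasible plans equals the minimum cardinality of a family of
sort pairs whose compatibility sets cover all commodities. -/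
theorem stmt3
    {S K : Type*} [Fintype S] [Fintype K] [DecidableEq S] [DecidableEq K]
    (Sk : K → Finset S) (hSk : ∀ k, (Sk k).Nonempty)
    (Q : ℕ)
    (hQ : Q = Finset.univ.sup fun s : S => (Finset.univ.filter fun k => s ∈ Sk k).card) :
    sInf {n : ℕ | ∃ (x : K → S → ℝ) (y : S → ℕ),
        (∀ k s, 0 ≤ x k s) ∧
        (∀ k s, s ∉ Sk k → x k s = 0) ∧
        (∀ k, (∑ s ∈ Sk k, x k s) = 1) ∧
        (∀ s, y s ≤ 1) ∧
        (∀ s, (∑ k ∈ Finset.univ.filter fun k => s ∈ Sk k, x k s) ≤ (Q : ℝ) * (y s : ℝ)) ∧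
        n = ∑ s, y s}
      =
    sInf {n : ℕ | ∃ T : Finset S, (∀ k, ∃ s ∈ T, s ∈ Sk k) ∧ n = T.card} :=
  stmt3_general Sk Q hQ
end

section
/- If each commodity k is compatible with exactly one sort pair s_k, the load planning problem decomposes: its optimal value equals the sum over sort pairs s of the optimal values of independent minimum-knapsack problems, each minimizing Σ_{v ∈ V_s} c_v y_{s,v} over nonnegative integers subject to Σ_{v ∈ V_s} Q_v y_{s,v} ≥ Σ_{k : s_k = s} q^k. -/
/-!
The sort pairs do not interact: a commodity only ever loads trailers of its own sort pair, so the
costs of the sort pairs add up and it suffices to show that the trailer counts `y s` feasible for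
the load plan are exactly those whose capacity covers the demand of `s`. One direction sums the
flow of the commodities of `s` over the trailer types; for the other, each commodity of `s` is
split over the trailer types of `s` in proportion to their installed capacity. The optimal value
of the load plan is then the infimum of a Minkowski sum of the knapsack cost sets, which is the
sum of their infima.
-/

open Finset
open scoped Pointwise

theorem csInf_finsetSum {ι M : Type*} [ConditionallyCompleteLattice M] [AddCommGroup M]
    [AddLeftMono M] [AddRightMono M] (t : Finset ι) (B : ι → Set M)
    (hne : ∀ i ∈ t, (B i).Nonempty) (hbdd : ∀ i ∈ t, BddBelow (B i)) :
    sInf (∑ i ∈ t, B i) = ∑ i ∈ t, sInf (B i) := by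
  classical
  suffices (∑ i ∈ t, B i).Nonempty ∧ BddBelow (∑ i ∈ t, B i) ∧
      sInf (∑ i ∈ t, B i) = ∑ i ∈ t, sInf (B i) from this.2.2
  induction t using Finset.induction_on with
  | empty => simp [← Set.singleton_zero]
  | insert i t hi ih =>
    obtain ⟨hne_t, hbdd_t, hinf_t⟩ := ih (fun j hj => hne j (mem_insert_of_mem hj))
      (fun j hj => hbdd j (mem_insert_of_mem hj))
    have hne_i := hne i (mem_insert_self i t)
    have hbdd_i := hbdd i (mem_insert_self i t)
    rw [sum_insert hi, sum_insert hi, csInf_add hne_i hbdd_i hne_t hbdd_t, hinf_t]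
    exact ⟨hne_i.add hne_t, hbdd_i.add hbdd_t, rfl⟩

section Knapsack

variable {V : Type*} (T : Finset V) (Q c : V → ℝ) (d : ℝ)

def knapsackCosts : Set ℝ :=
  {cost | ∃ y : V → ℕ, d ≤ ∑ v ∈ T, Q v * (y v : ℝ) ∧ cost = ∑ v ∈ T, c v * (y v : ℝ)}

variable {T Q c d}

theorem knapsackCosts_nonempty (hQ : ∀ v, 0 < Q v) (hT : 0 < d → T.Nonempty) :
    (knapsackCosts T Q c d).Nonempty := by
  refine ⟨_, fun v => ⌈d / Q v⌉₊, ?_, rfl⟩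
  have hterm : ∀ v ∈ T, 0 ≤ Q v * (⌈d / Q v⌉₊ : ℝ) :=
    fun v _ => mul_nonneg (hQ v).le (Nat.cast_nonneg _)
  rcases le_or_gt d 0 with hd | hd
  · exact hd.trans (sum_nonneg hterm)
  · obtain ⟨v, hv⟩ := hT hd
    calc d = Q v * (d / Q v) := (mul_div_cancel₀ d (hQ v).ne').symm
      _ ≤ Q v * (⌈d / Q v⌉₊ : ℝ) := mul_le_mul_of_nonneg_left (Nat.le_ceil _) (hQ v).le
      _ ≤ _ := single_le_sum hterm hv

theorem knapsackCosts_bddBelow (hc : ∀ v, 0 ≤ c v) : BddBelow (knapsackCosts T Q c d) := by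
  refine ⟨0, ?_⟩
  rintro _ ⟨y, -, rfl⟩
  exact sum_nonneg fun v _ => mul_nonneg (hc v) (Nat.cast_nonneg _)

end Knapsack

section LoadPlan

variable {S K V : Type*} [Fintype K] [DecidableEq S]
  (sk : K → S) (Vs : S → Finset V) (Qv cv : V → ℝ) (q : K → ℝ)

def sortDemand (s : S) : ℝ := ∑ k ∈ univ.filter fun k => sk k = s, q k

def IsFeasibleLoadPlan (x : K → V → ℝ) (y : S → V → ℕ) : Prop :=
  (∀ k v, 0 ≤ x k v) ∧
  (∀ k v, v ∉ Vs (sk k) → x k v = 0) ∧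
  (∀ k, (∑ v ∈ Vs (sk k), x k v) = q k) ∧
  (∀ s, ∀ v ∈ Vs s, (∑ k ∈ univ.filter fun k => sk k = s, x k v) ≤ Qv v * (y s v : ℝ))

def loadPlanCosts [Fintype S] : Set ℝ :=
  {cost | ∃ x y, IsFeasibleLoadPlan sk Vs Qv q x y ∧
    cost = ∑ s, ∑ v ∈ Vs s, cv v * (y s v : ℝ)}

variable {sk Vs Qv cv q}

theorem IsFeasibleLoadPlan.sortDemand_le {x : K → V → ℝ} {y : S → V → ℕ}
    (h : IsFeasibleLoadPlan sk Vs Qv q x y) (s : S) :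
    sortDemand sk q s ≤ ∑ v ∈ Vs s, Qv v * (y s v : ℝ) := by
  obtain ⟨-, -, hdemand, hcap⟩ := h
  calc sortDemand sk q s = ∑ k ∈ univ.filter fun k => sk k = s, ∑ v ∈ Vs s, x k v :=
        sum_congr rfl fun k hk => by rw [← (mem_filter.1 hk).2, hdemand]
    _ = ∑ v ∈ Vs s, ∑ k ∈ univ.filter fun k => sk k = s, x k v := sum_comm
    _ ≤ ∑ v ∈ Vs s, Qv v * (y s v : ℝ) := sum_le_sum (hcap s)

theorem exists_isFeasibleLoadPlan (hQv : ∀ v, 0 ≤ Qv v) (hq : ∀ k, 0 ≤ q k) (y : S → V → ℕ)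
    (hy : ∀ s, sortDemand sk q s ≤ ∑ v ∈ Vs s, Qv v * (y s v : ℝ)) :
    ∃ x, IsFeasibleLoadPlan sk Vs Qv q x y := by
  set w : S → V → ℝ := fun s v => Qv v * (y s v : ℝ)
  set C : S → ℝ := fun s => ∑ v ∈ Vs s, w s v
  have hw : ∀ s v, 0 ≤ w s v := fun s v => mul_nonneg (hQv v) (Nat.cast_nonneg _)
  have hC : ∀ s, 0 ≤ C s := fun s => sum_nonneg fun v _ => hw s v
  have hq_le : ∀ k, q k ≤ C (sk k) := fun k =>
    (single_le_sum (f := q) (s := univ.filter fun j => sk j = sk k) (fun j _ => hq j)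
      (mem_filter.2 ⟨mem_univ k, rfl⟩)).trans (hy (sk k))
  refine ⟨fun k => (Vs (sk k) : Set V).indicator fun v => q k / C (sk k) * w (sk k) v,
    fun k v => Set.indicator_nonneg (fun v _ => mul_nonneg (div_nonneg (hq k) (hC _)) (hw _ v)) v,
    fun k v hv => Set.indicator_of_notMem (mt mem_coe.1 hv) _, fun k => ?_,
    fun s v hv => ?_⟩
  · rw [sum_congr rfl fun v hv => Set.indicator_of_mem (mem_coe.2 hv) _, ← mul_sum]
    -- if `C (sk k) = 0` then `q k = 0`, so the junk value `q k / 0 = 0` does no harm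
    exact div_mul_cancel_of_imp fun h0 => le_antisymm (h0 ▸ hq_le k) (hq k)
  · calc (∑ k ∈ univ.filter fun k => sk k = s,
          (Vs (sk k) : Set V).indicator (fun v => q k / C (sk k) * w (sk k) v) v)
          = sortDemand sk q s / C s * w s v := by
            rw [sortDemand, sum_div, sum_mul]
            refine sum_congr rfl fun k hk => ?_
            rw [(mem_filter.1 hk).2]
            exact Set.indicator_of_mem (mem_coe.2 hv) _
      _ ≤ 1 * w s v := mul_le_mul_of_nonneg_right (div_le_one_of_le₀ (hy s) (hC s)) (hw s v)
      _ = Qv v * (y s v : ℝ) := one_mul _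

theorem loadPlanCosts_eq_sum_knapsackCosts [Fintype S] (hQv : ∀ v, 0 ≤ Qv v)
    (hq : ∀ k, 0 ≤ q k) :
    loadPlanCosts sk Vs Qv cv q = ∑ s, knapsackCosts (Vs s) Qv cv (sortDemand sk q s) := by
  ext cost
  rw [Set.mem_fintype_sum]
  constructor
  · rintro ⟨x, y, hxy, rfl⟩
    exact ⟨_, fun s => ⟨y s, hxy.sortDemand_le s, rfl⟩, rfl⟩
  · rintro ⟨g, hg, rfl⟩
    choose y hy hcost using hg
    obtain ⟨x, hxy⟩ := exists_isFeasibleLoadPlan hQv hq y hy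
    exact ⟨x, y, hxy, sum_congr rfl fun s _ => hcost s⟩

end LoadPlan

theorem stmt12_general
    {S K V : Type*} [Fintype S] [Fintype K] [DecidableEq S]
    (sk : K → S) (Vs : S → Finset V)
    (Qv cv : V → ℝ) (hQv : ∀ v, 0 < Qv v) (hcv : ∀ v, 0 < cv v)
    (q : K → ℝ) (hq : ∀ k, 0 ≤ q k)
    (hVs : ∀ s, (0 < ∑ k ∈ Finset.univ.filter fun k => sk k = s, q k) → (Vs s).Nonempty) :
    sInf {cost : ℝ | ∃ (x : K → V → ℝ) (y : S → V → ℕ),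
        (∀ k v, 0 ≤ x k v) ∧
        (∀ k v, v ∉ Vs (sk k) → x k v = 0) ∧
        (∀ k, (∑ v ∈ Vs (sk k), x k v) = q k) ∧
        (∀ s, ∀ v ∈ Vs s,
          (∑ k ∈ Finset.univ.filter fun k => sk k = s, x k v) ≤ Qv v * (y s v : ℝ)) ∧
        cost = ∑ s, ∑ v ∈ Vs s, cv v * (y s v : ℝ)}
      =
    ∑ s, sInf {cost : ℝ | ∃ y : V → ℕ,
        (∑ k ∈ Finset.univ.filter fun k => sk k = s, q k)
          ≤ (∑ v ∈ Vs s, Qv v * (y v : ℝ)) ∧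
        cost = ∑ v ∈ Vs s, cv v * (y v : ℝ)} := by
  have hsets := loadPlanCosts_eq_sum_knapsackCosts (sk := sk) (Vs := Vs) (cv := cv)
    (fun v => (hQv v).le) hq
  simp only [loadPlanCosts, IsFeasibleLoadPlan, and_assoc] at hsets
  rw [hsets]
  exact csInf_finsetSum univ _ (fun s _ => knapsackCosts_nonempty hQv (hVs s))
    (fun s _ => knapsackCosts_bddBelow fun v => (hcv v).le)

/-- if each commodity `k` is compatible with exactly one sort pair
`sk k`, the load planning problem decomposes: its optimal value equals the sum
over sort pairs `s` of the optimal values of independent minimum-knapsack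
problems with demand `Σ_{k : sk k = s} q k` and trailer types `V_s`. -/
theorem stmt12
    {S K V : Type*} [Fintype S] [Fintype K] [Fintype V] [DecidableEq S] [DecidableEq V]
    (sk : K → S) (Vs : S → Finset V)
    (Qv cv : V → ℝ) (hQv : ∀ v, 0 < Qv v) (hcv : ∀ v, 0 < cv v)
    (q : K → ℝ) (hq : ∀ k, 0 ≤ q k)
    (hVs : ∀ s, (0 < ∑ k ∈ Finset.univ.filter fun k => sk k = s, q k) → (Vs s).Nonempty) :
    sInf {cost : ℝ | ∃ (x : K → V → ℝ) (y : S → V → ℕ),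
        (∀ k v, 0 ≤ x k v) ∧
        (∀ k v, v ∉ Vs (sk k) → x k v = 0) ∧
        (∀ k, (∑ v ∈ Vs (sk k), x k v) = q k) ∧
        (∀ s, ∀ v ∈ Vs s,
          (∑ k ∈ Finset.univ.filter fun k => sk k = s, x k v) ≤ Qv v * (y s v : ℝ)) ∧
        cost = ∑ s, ∑ v ∈ Vs s, cv v * (y s v : ℝ)}
      =
    ∑ s, sInf {cost : ℝ | ∃ y : V → ℕ,
        (∑ k ∈ Finset.univ.filter fun k => sk k = s, q k)
          ≤ (∑ v ∈ Vs s, Qv v * (y v : ℝ)) ∧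
        cost = ∑ v ∈ Vs s, cv v * (y v : ℝ)} :=
  stmt12_general sk Vs Qv cv hQv hcv q hq hVs
end
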